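/- arXiv:1607.02286 — 3 statements merged into one kernel-verified Lean document; each statement's English description precedes it below -/
import Mathlib

section
/- Let w ∈ W. If w = w₁st for some w₁ ∈ W with ℓ(w) = ℓ(w₁) + 2 and R(w₁s) = {s}, then r ∉ R(w); and if w = w₁sr for some w₁ ∈ W with ℓ(w) = ℓ(w₁) + 2 and R(w₁s) = {s}, then t ∉ R(w). -/
/-!
Put `x = w₁ s`. The hypothesis `R(x) = {s}` gives `r, t ∉ R(x)`, and since `r` and `t` are distinct
commuting simple reflections, right multiplication by one of them does not change whether the other
is a right descent. This is read off from the Björner–Brenti sign `η(w, ρ) = ±1`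
(`CoxeterSystem.inversionSign`), which detects right descents and satisfies
`η(uv, ρ) = η(v, ρ) η(u, vρv⁻¹)`: indeed `η(t, r) = 1` and `t r t⁻¹ = r`. That `r ≠ t` in `W` is
seen in the geometric representation of `W` by `3 × 3` matrices.
-/

open Finset

lemma Function.End.mul_apply {α : Type*} (f g : Function.End α) (x : α) : (f * g) x = f (g x) :=
  rfl

lemma pow_mul_swap_eq_one {M : Type*} [Monoid M] {x y : M} (hx : x * x = 1) {k : ℕ}
    (h : (x * y) ^ k = 1) : (y * x) ^ k = 1 := by
  have hconj : SemiconjBy x (x * y) (y * x) := by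
    rw [SemiconjBy, ← mul_assoc, hx, one_mul, mul_assoc, hx, mul_one]
  have := hconj.pow_right k
  rw [SemiconjBy, h, mul_one] at this
  rw [← mul_one ((y * x) ^ k), ← hx, ← mul_assoc, ← this, hx]

open scoped Classical in
noncomputable def flipSign {α : Type*} (x ρ : α) : ℤˣ := if ρ = x then -1 else 1

lemma flipSign_mul_self {α : Type*} (x ρ : α) : flipSign x ρ * flipSign x ρ = 1 := by
  unfold flipSign
  split_ifs <;> simp

section SignedConjugation

variable {G : Type*} [Group G]

lemma flipSign_conj (x g ρ : G) : flipSign x (g * ρ * g⁻¹) = flipSign (g⁻¹ * x * g) ρ := by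
  have : g * ρ * g⁻¹ = x ↔ ρ = g⁻¹ * x * g := by
    constructor <;> rintro rfl <;> group
  classical
  exact if_congr this rfl rfl

noncomputable def signedConj (a : G) : Function.End (G × ℤˣ) :=
  fun p => (a * p.1 * a, p.2 * flipSign a p.1)

variable {a b : G}

lemma signedConj_mul_signedConj_apply (hb : b * b = 1) (ρ : G) (ε : ℤˣ) :
    (signedConj a * signedConj b) (ρ, ε) =
      (a * b * ρ * (b * a), ε * (flipSign b ρ * flipSign (b * a * b) ρ)) := by
  have hconj := flipSign_conj a b ρ
  rw [inv_eq_of_mul_eq_one_right hb] at hconj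
  simp only [Function.End.mul_apply, signedConj]
  rw [hconj]
  simp only [mul_assoc]

lemma signedConj_mul_signedConj_pow_apply (ha : a * a = 1) (hb : b * b = 1) (k : ℕ) (ρ : G)
    (ε : ℤˣ) :
    ((signedConj a * signedConj b) ^ k) (ρ, ε) =
      ((a * b) ^ k * ρ * (b * a) ^ k, ε * ∏ n ∈ range (2 * k), flipSign ((b * a) ^ n * b) ρ) := by
  induction k generalizing ρ ε with
  | zero => simp [Function.End.one_def]
  | succ k ih =>
    have hab : (a * b)⁻¹ = b * a := by
      rw [mul_inv_rev, inv_eq_of_mul_eq_one_right ha, inv_eq_of_mul_eq_one_right hb]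
    have hshift (n : ℕ) : flipSign ((b * a) ^ n * b) (a * b * ρ * (b * a)) =
        flipSign ((b * a) ^ (n + 2) * b) ρ := by
      rw [← hab, flipSign_conj, hab, pow_succ, pow_succ']
      simp only [mul_assoc]
    rw [pow_succ, Function.End.mul_apply, signedConj_mul_signedConj_apply hb, ih]
    refine Prod.ext ?_ ?_
    · rw [pow_succ, pow_succ' (b * a)]
      simp only [mul_assoc]
    · rw [Nat.mul_succ, prod_range_succ', prod_range_succ']
      simp only [hshift]
      simp only [zero_add, pow_zero, pow_one, one_mul, mul_assoc]
      ac_rfl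

/- The sign flips at `(b a) ^ n * b` for `n < 2 m`; once `(b a) ^ m = 1` each of these elements
occurs twice in that list. -/
lemma signedConj_mul_signedConj_pow_eq_one (ha : a * a = 1) (hb : b * b = 1) {m : ℕ}
    (hab : (a * b) ^ m = 1) : (signedConj a * signedConj b) ^ m = 1 := by
  have hba : (b * a) ^ m = 1 := pow_mul_swap_eq_one ha hab
  funext ⟨ρ, ε⟩
  rw [signedConj_mul_signedConj_pow_apply ha hb, hab, hba, two_mul, prod_range_add]
  simp only [pow_add, hba, one_mul, ← prod_mul_distrib, flipSign_mul_self, prod_const_one,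
    mul_one]
  rfl

end SignedConjugation

lemma pow_eq_one_of_semiconjBy {M : Type*} [Monoid M] {A Q D : M} (hQ : IsUnit Q)
    (h : SemiconjBy Q D A) {k : ℕ} (hD : D ^ k = 1) : A ^ k = 1 := by
  have := h.pow_right k
  rwa [SemiconjBy, hD, mul_one, eq_comm, hQ.mul_eq_right] at this

lemma Complex.exists_sq_ne_one_pow_eq_one {m : ℕ} (hm : m ≠ 1) :
    ∃ μ : ℂ, μ ≠ 0 ∧ μ ^ 2 ≠ 1 ∧ (μ ^ 2) ^ m = 1 := by
  obtain rfl | hm0 := eq_or_ne m 0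
  · -- `m = 0` encodes an infinite order, for which the braid relation is vacuous.
    exact ⟨2, by norm_num, by norm_num, pow_zero _⟩
  have hμ := Complex.isPrimitiveRoot_exp (2 * m) (by omega)
  refine ⟨_, hμ.ne_zero (by omega), hμ.pow_ne_one_of_pos_of_lt two_ne_zero (by omega), ?_⟩
  rw [← pow_mul, hμ.pow_eq_one]

namespace TitsRep

open Matrix

variable {μ : ℂ}

lemma four_sub_sq_ne_zero (hμ0 : μ ≠ 0) (hμ1 : μ ^ 2 ≠ 1) : (4 : ℂ) - (μ + μ⁻¹) ^ 2 ≠ 0 := by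
  have : (4 : ℂ) - (μ + μ⁻¹) ^ 2 = -(μ⁻¹ ^ 2 * (μ ^ 2 - 1) ^ 2) := by
    field_simp
    ring
  rw [this, neg_ne_zero]
  exact mul_ne_zero (pow_ne_zero _ (inv_ne_zero hμ0)) (pow_ne_zero _ (sub_ne_zero.mpr hμ1))

lemma diagonal_pow_eq_one {m : ℕ} (hm : (μ ^ 2) ^ m = 1) :
    diagonal ![μ ^ 2, (μ ^ 2)⁻¹, 1] ^ m = 1 := by
  rw [diagonal_pow, ← diagonal_one]
  congr 1
  ext i
  fin_cases i <;> simp [hm, inv_pow]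

/- The reflections `σ_s, σ_r, σ_t` of the geometric representation in the basis `(e_s, e_r, e_t)`,
with `a = -2 B(e_s, e_r)` and `c = -2 B(e_s, e_t)`; `B(e_r, e_t) = 0` since `m_rt = 2`. -/
def reflS (a c : ℂ) : Matrix (Fin 3) (Fin 3) ℂ := !![-1, a, c; 0, 1, 0; 0, 0, 1]

def reflR (a : ℂ) : Matrix (Fin 3) (Fin 3) ℂ := !![1, 0, 0; a, -1, 0; 0, 0, 1]

def reflT (c : ℂ) : Matrix (Fin 3) (Fin 3) ℂ := !![1, 0, 0; 0, 1, 0; c, 0, -1]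

lemma reflS_mul_self (a c : ℂ) : reflS a c * reflS a c = 1 := by
  rw [one_fin_three, reflS, mul_fin_three]
  simp

lemma reflR_mul_self (a : ℂ) : reflR a * reflR a = 1 := by
  rw [one_fin_three, reflR, mul_fin_three]
  simp

lemma reflT_mul_self (c : ℂ) : reflT c * reflT c = 1 := by
  rw [one_fin_three, reflT, mul_fin_three]
  simp

lemma reflR_mul_reflT_pow_two (a c : ℂ) : (reflR a * reflT c) ^ 2 = 1 := by
  rw [sq, one_fin_three, reflR, reflT]
  simp

lemma reflS_mul_reflR_pow (hμ0 : μ ≠ 0) (hμ1 : μ ^ 2 ≠ 1) {m : ℕ} (hm : (μ ^ 2) ^ m = 1)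
    (c : ℂ) : (reflS (μ + μ⁻¹) c * reflR (μ + μ⁻¹)) ^ m = 1 := by
  set a := μ + μ⁻¹ with ha
  -- The columns of `Q` are eigenvectors of `σ_s σ_r` for the eigenvalues `μ², μ⁻², 1`.
  let Q : Matrix (Fin 3) (Fin 3) ℂ := !![μ, 1, 2 * c; 1, μ, a * c; 0, 0, 4 - a ^ 2]
  have hQ : Q.det = (μ ^ 2 - 1) * (4 - a ^ 2) := by
    simp [Q, det_fin_three]
    ring
  refine pow_eq_one_of_semiconjBy (Q := Q) (D := diagonal ![μ ^ 2, (μ ^ 2)⁻¹, 1]) ?_ ?_ ?_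
  · rw [isUnit_iff_isUnit_det, hQ, isUnit_iff_ne_zero]
    exact mul_ne_zero (sub_ne_zero.mpr hμ1) (four_sub_sq_ne_zero hμ0 hμ1)
  · rw [SemiconjBy, reflS, reflR]
    ext i j
    fin_cases i <;> fin_cases j <;>
      simp [Q, mul_apply, Fin.sum_univ_three, ha] <;> field_simp <;> ring
  · exact diagonal_pow_eq_one hm

lemma reflS_mul_reflT_pow (hμ0 : μ ≠ 0) (hμ1 : μ ^ 2 ≠ 1) {m : ℕ} (hm : (μ ^ 2) ^ m = 1)
    (a : ℂ) : (reflS a (μ + μ⁻¹) * reflT (μ + μ⁻¹)) ^ m = 1 := by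
  set c := μ + μ⁻¹ with hc
  -- The columns of `Q` are eigenvectors of `σ_s σ_t` for the eigenvalues `μ², μ⁻², 1`.
  let Q : Matrix (Fin 3) (Fin 3) ℂ := !![μ, 1, 2 * a; 0, 0, 4 - c ^ 2; 1, μ, a * c]
  have hQ : Q.det = (1 - μ ^ 2) * (4 - c ^ 2) := by
    simp [Q, det_fin_three]
    ring
  refine pow_eq_one_of_semiconjBy (Q := Q) (D := diagonal ![μ ^ 2, (μ ^ 2)⁻¹, 1]) ?_ ?_ ?_
  · rw [isUnit_iff_isUnit_det, hQ, isUnit_iff_ne_zero]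
    exact mul_ne_zero (sub_ne_zero.mpr hμ1.symm) (four_sub_sq_ne_zero hμ0 hμ1)
  · rw [SemiconjBy, reflS, reflT]
    ext i j
    fin_cases i <;> fin_cases j <;>
      simp [Q, mul_apply, Fin.sum_univ_three, hc] <;> field_simp <;> ring
  · exact diagonal_pow_eq_one hm

end TitsRep

namespace CoxeterSystem

variable {B W : Type*} [Group W] {M : CoxeterMatrix B} (cs : CoxeterSystem M W)

noncomputable def signRep : W →* Function.End (W × ℤˣ) :=
  cs.lift ⟨fun i => signedConj (cs.simple i), fun i i' =>
    signedConj_mul_signedConj_pow_eq_one (cs.simple_mul_simple_self i)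
      (cs.simple_mul_simple_self i') (cs.simple_mul_simple_pow i i')⟩

noncomputable def inversionSign (w ρ : W) : ℤˣ := (cs.signRep w (ρ, 1)).2

lemma signRep_simple (i : B) : cs.signRep (cs.simple i) = signedConj (cs.simple i) :=
  cs.lift_apply_simple _ i

lemma signRep_wordProd (ω : List B) (ρ : W) (ε : ℤˣ) :
    cs.signRep (cs.wordProd ω) (ρ, ε) = (cs.wordProd ω * ρ * (cs.wordProd ω)⁻¹,
      ε * ((cs.rightInvSeq ω).map (flipSign · ρ)).prod) := by
  induction ω generalizing ρ ε with
  | nil => simp [Function.End.one_def]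
  | cons i ω ih =>
    rw [cs.wordProd_cons, map_mul, Function.End.mul_apply, ih, signRep_simple, rightInvSeq,
      List.map_cons, List.prod_cons, ← flipSign_conj]
    refine Prod.ext ?_ ?_
    · simp only [signedConj, mul_inv_rev, inv_simple, mul_assoc]
    · simp only [signedConj, mul_comm, mul_left_comm]

lemma signRep_apply (w ρ : W) (ε : ℤˣ) :
    cs.signRep w (ρ, ε) = (w * ρ * w⁻¹, ε * cs.inversionSign w ρ) := by
  obtain ⟨ω, rfl⟩ := cs.wordProd_surjective w
  simp only [inversionSign, signRep_wordProd, one_mul]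

lemma inversionSign_mul (u v ρ : W) :
    cs.inversionSign (u * v) ρ = cs.inversionSign v ρ * cs.inversionSign u (v * ρ * v⁻¹) := by
  rw [inversionSign, map_mul, Function.End.mul_apply, signRep_apply, signRep_apply, one_mul]

lemma inversionSign_simple (i : B) (ρ : W) :
    cs.inversionSign (cs.simple i) ρ = flipSign (cs.simple i) ρ := by
  simp only [inversionSign, signRep_simple, signedConj, one_mul]

lemma isRightInversion_of_inversionSign_eq_neg_one {w ρ : W} (h : cs.inversionSign w ρ = -1) :
    cs.IsRightInversion w ρ := by
  obtain ⟨ω, hω, rfl⟩ := cs.exists_isReduced w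
  refine cs.isRightInversion_of_mem_rightInvSeq hω ?_
  by_contra hρ
  rw [inversionSign, signRep_wordProd, one_mul, List.prod_eq_one] at h
  · exact absurd h (by decide : (1 : ℤˣ) ≠ -1)
  · simp only [List.mem_map]
    rintro _ ⟨c, hc, rfl⟩
    exact if_neg (ne_of_mem_of_not_mem hc hρ).symm

lemma isRightDescent_iff_inversionSign_eq_neg_one (w : W) (i : B) :
    cs.IsRightDescent w i ↔ cs.inversionSign w (cs.simple i) = -1 := by
  refine ⟨fun h => ?_, fun h => ?_⟩
  · have hsign : cs.inversionSign (w * cs.simple i) (cs.simple i) = 1 := by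
      refine (Int.units_eq_one_or _).resolve_right fun h' => ?_
      exact cs.isRightDescent_iff_not_isRightDescent_mul.mp h
        ((cs.isRightInversion_simple_iff_isRightDescent _ i).mp
          (cs.isRightInversion_of_inversionSign_eq_neg_one h'))
    have := cs.inversionSign_mul (w * cs.simple i) (cs.simple i) (cs.simple i)
    rwa [simple_mul_simple_cancel_right, inv_simple, simple_mul_simple_cancel_right,
      inversionSign_simple, flipSign, if_pos rfl, hsign, mul_one] at this
  · exact (cs.isRightInversion_simple_iff_isRightDescent w i).mp
      (cs.isRightInversion_of_inversionSign_eq_neg_one h)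

lemma commute_simple_of_eq_two {i j : B} (h : M i j = 2) : Commute (cs.simple i) (cs.simple j) := by
  have hpow := cs.simple_mul_simple_pow i j
  rw [h, sq, mul_eq_one_iff_eq_inv, mul_inv_rev, inv_simple, inv_simple] at hpow
  exact hpow

lemma isRightDescent_mul_simple_iff_of_commute {w : W} {i j : B}
    (hcomm : Commute (cs.simple i) (cs.simple j)) (hne : cs.simple i ≠ cs.simple j) :
    cs.IsRightDescent (w * cs.simple j) i ↔ cs.IsRightDescent w i := by
  have hconj : cs.simple j * cs.simple i * (cs.simple j)⁻¹ = cs.simple i := by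
    rw [← hcomm.eq, mul_inv_cancel_right]
  rw [isRightDescent_iff_inversionSign_eq_neg_one, isRightDescent_iff_inversionSign_eq_neg_one,
    inversionSign_mul, hconj, inversionSign_simple, flipSign, if_neg hne, one_mul]

open TitsRep in
lemma simple_ne_simple_of_rank_three {r s t : B} (hrs : r ≠ s) (hrt : r ≠ t) (hst : s ≠ t)
    (hB : ∀ i : B, i = r ∨ i = s ∨ i = t) (mrt : M r t = 2) : cs.simple r ≠ cs.simple t := by
  classical
  obtain ⟨μ, hμ0, hμ1, hμ⟩ := Complex.exists_sq_ne_one_pow_eq_one (M.off_diagonal s r hrs.symm)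
  obtain ⟨ν, hν0, hν1, hν⟩ := Complex.exists_sq_ne_one_pow_eq_one (M.off_diagonal s t hst)
  let f : B → Matrix (Fin 3) (Fin 3) ℂ := fun i =>
    if i = r then reflR (μ + μ⁻¹) else if i = s then reflS (μ + μ⁻¹) (ν + ν⁻¹) else reflT (ν + ν⁻¹)
  have hfr : f r = reflR (μ + μ⁻¹) := if_pos rfl
  have hfs : f s = reflS (μ + μ⁻¹) (ν + ν⁻¹) := by simp [f, hrs.symm]
  have hft : f t = reflT (ν + ν⁻¹) := by simp [f, hrt.symm, hst.symm]
  have hlift : M.IsLiftable f := by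
    intro i i'
    rcases hB i with rfl | rfl | rfl <;> rcases hB i' with rfl | rfl | rfl <;>
      simp only [hfr, hfs, hft, M.diagonal, pow_one, reflR_mul_self, reflS_mul_self,
        reflT_mul_self]
    · rw [M.symmetric]
      exact pow_mul_swap_eq_one (reflS_mul_self _ _) (reflS_mul_reflR_pow hμ0 hμ1 hμ _)
    · rw [mrt]
      exact reflR_mul_reflT_pow_two _ _
    · exact reflS_mul_reflR_pow hμ0 hμ1 hμ _
    · exact reflS_mul_reflT_pow hν0 hν1 hν _
    · rw [M.symmetric, mrt]
      exact pow_mul_swap_eq_one (reflR_mul_self _) (reflR_mul_reflT_pow_two _ _)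
    · rw [M.symmetric]
      exact pow_mul_swap_eq_one (reflS_mul_self _ _) (reflS_mul_reflT_pow hν0 hν1 hν _)
  intro h
  have := congrFun₂ (congrArg (cs.lift ⟨f, hlift⟩) h) 1 1
  norm_num [hfr, hft, reflR, reflT] at this

end CoxeterSystem

theorem stmt7_general {B : Type*} {W : Type*} [Group W] {M : CoxeterMatrix B}
    (cs : CoxeterSystem M W) (r s t : B)
    (hrs : r ≠ s) (hrt : r ≠ t) (hst : s ≠ t)
    (hB : ∀ i : B, i = r ∨ i = s ∨ i = t)
    (mrt : M r t = 2)
    (w : W) :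
    (∀ w₁ : W, w = w₁ * cs.simple s * cs.simple t → cs.length w = cs.length w₁ + 2 →
      (∀ i : B, cs.IsRightDescent (w₁ * cs.simple s) i ↔ i = s) →
      ¬ cs.IsRightDescent w r) ∧
    (∀ w₁ : W, w = w₁ * cs.simple s * cs.simple r → cs.length w = cs.length w₁ + 2 →
      (∀ i : B, cs.IsRightDescent (w₁ * cs.simple s) i ↔ i = s) →
      ¬ cs.IsRightDescent w t) := by
  have hcomm := cs.commute_simple_of_eq_two mrt
  have hne := cs.simple_ne_simple_of_rank_three hrs hrt hst hB mrt
  constructor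
  · rintro w₁ rfl - hdesc
    rw [cs.isRightDescent_mul_simple_iff_of_commute hcomm hne]
    exact fun h => hrs ((hdesc r).mp h)
  · rintro w₁ rfl - hdesc
    rw [cs.isRightDescent_mul_simple_iff_of_commute hcomm.symm hne.symm]
    exact fun h => hst ((hdesc t).mp h).symm

/-- if w = w₁·st and R(w₁s) = {s} then r ∉ R(w); if w = w₁·sr and R(w₁s) = {s} then t ∉ R(w). -/
theorem stmt7 {B : Type*} {W : Type*} [Group W] {M : CoxeterMatrix B}
    (cs : CoxeterSystem M W) (r s t : B)
    (hrs : r ≠ s) (hrt : r ≠ t) (hst : s ≠ t)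
    (hB : ∀ i : B, i = r ∨ i = s ∨ i = t)
    (mrt : M r t = 2) (msr : 5 ≤ M s r) (mst : 4 ≤ M s t) (mstsr : M s t ≤ M s r)
    (w : W) :
    (∀ w₁ : W, w = w₁ * cs.simple s * cs.simple t → cs.length w = cs.length w₁ + 2 →
      (∀ i : B, cs.IsRightDescent (w₁ * cs.simple s) i ↔ i = s) →
      ¬ cs.IsRightDescent w r) ∧
    (∀ w₁ : W, w = w₁ * cs.simple s * cs.simple r → cs.length w = cs.length w₁ + 2 →
      (∀ i : B, cs.IsRightDescent (w₁ * cs.simple s) i ↔ i = s) →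
      ¬ cs.IsRightDescent w t) :=
  stmt7_general cs r s t hrs hrt hst hB mrt w
end

section
/- Let w ∈ W. If w = w₁tst for some w₁ ∈ W with ℓ(w) = ℓ(w₁) + 3, then r ∉ R(w); and if w = w₁rsr for some w₁ ∈ W with ℓ(w) = ℓ(w₁) + 3, then t ∉ R(w). -/
/-!
Call `x` *bad* for `(a, b)` if `s` and `a` are right descents of `x` and `b` is a right descent
of `x s`. If `w = w₁ t s t` with lengths adding up and `r` is a right descent of `w`, then `w t` is
bad for `(r, t)`; symmetrically for the second claim. Since `sa` has order at least `4`, a bad `x`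
has a reduced expression ending in `a s a s`, and then `x s a` is bad for `(b, a)` and two shorter.
Descending on the length, no bad element exists.

The length bookkeeping rests on the exchange property, obtained from the action of `W` on
`W × {±1}` that records the parity of occurrences of a reflection in inversion sequences. That `sr` and `st` have orders `m_sr` and `m_st`, and `r ≠ t` in `W`, is read off from
the geometric representation in `GL₃(ℂ)`.
-/

theorem SemiconjBy.pow_eq_one_iff {G : Type*} [Monoid G] {a x y : G} (h : SemiconjBy a x y)
    (ha : IsUnit a) (n : ℕ) : x ^ n = 1 ↔ y ^ n = 1 := by
  rw [← ha.mul_eq_left, h.pow_right n, ha.mul_eq_right]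

theorem pow_mul_eq_one_comm_of_mul_self {G : Type*} [Monoid G] {x y : G} (hx : x * x = 1)
    (n : ℕ) : (y * x) ^ n = 1 ↔ (x * y) ^ n = 1 :=
  SemiconjBy.pow_eq_one_iff (mul_assoc x y x).symm (isUnit_iff_exists.mpr ⟨x, hx, hx⟩) n

theorem CoxeterMatrix.isLiftable_of_forall_eq_or_eq_or_eq {B G : Type*} [Monoid G]
    {M : CoxeterMatrix B} {r s t : B} (hB : ∀ i, i = r ∨ i = s ∨ i = t) {f : B → G}
    (hf : ∀ i, f i * f i = 1) (hsr : (f s * f r) ^ M s r = 1) (hst : (f s * f t) ^ M s t = 1)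
    (hrt : (f r * f t) ^ M r t = 1) : M.IsLiftable f := by
  have hswap {i j : B} (h : (f i * f j) ^ M i j = 1) : (f j * f i) ^ M j i = 1 := by
    rwa [M.symmetric, pow_mul_eq_one_comm_of_mul_self (hf i)]
  intro i j
  rcases hB i with rfl | rfl | rfl <;> rcases hB j with rfl | rfl | rfl <;>
    first
    | rw [M.diagonal, pow_one, hf]
    | assumption
    | exact hswap ‹_›

namespace CoxeterSystem

variable {B W : Type*} [Group W] {M : CoxeterMatrix B} (cs : CoxeterSystem M W)

local prefix:100 "σ" => cs.simple
local prefix:100 "π" => cs.wordProd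
local prefix:100 "ℓ" => cs.length
local prefix:100 "ris" => cs.rightInvSeq
local prefix:100 "lis" => cs.leftInvSeq

open Classical in
noncomputable def flipSign (t u : W) : ℤˣ := if t = u then -1 else 1

lemma flipSign_conj (g t u : W) : flipSign (g * t * g⁻¹) u = flipSign t (g⁻¹ * u * g) := by
  have h : g * t * g⁻¹ = u ↔ t = g⁻¹ * u * g :=
    ⟨fun h => by rw [← h]; group, fun h => by rw [h]; group⟩
  unfold flipSign
  split_ifs <;> simp_all

lemma flipSign_conj_simple (i : B) (t : W) :
    flipSign (σ i * t * σ i) (σ i) = flipSign t (σ i) := by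
  simpa using flipSign_conj (σ i) t (σ i)

/-- The classical action of `σ i` on `W × {±1}` behind the exchange property: it conjugates by
`σ i` and flips the sign exactly at `σ i`, so that the sign records the parity of the number of
occurrences of a reflection in a right inversion sequence. -/
noncomputable def reflectionPerm (i : B) : Equiv.Perm (W × ℤˣ) :=
  Function.Involutive.toPerm (fun p => (σ i * p.1 * σ i, flipSign p.1 (σ i) * p.2)) <| by
    rintro ⟨t, ε⟩
    simp [flipSign_conj_simple, ← mul_assoc, Int.units_mul_self]

lemma reflectionPerm_apply (i : B) (t : W) (ε : ℤˣ) :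
    cs.reflectionPerm i (t, ε) = (σ i * t * σ i, flipSign t (σ i) * ε) := rfl

lemma reflectionPerm_mul_apply (i j : B) (t : W) (ε : ℤˣ) :
    (cs.reflectionPerm i * cs.reflectionPerm j) (t, ε) =
      ((σ i * σ j) * t * (σ j * σ i),
        flipSign t (σ j) * flipSign t ((σ j * σ i) * σ j) * ε) := by
  have h := flipSign_conj (σ j) t (σ i)
  simp only [inv_simple] at h
  simp only [Equiv.Perm.mul_apply, reflectionPerm_apply, h, Prod.mk.injEq]
  constructor
  · group
  · rw [mul_assoc (σ j)]; ac_rfl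

lemma reflectionPerm_mul_pow_apply (i j : B) (k : ℕ) (t : W) (ε : ℤˣ) :
    ((cs.reflectionPerm i * cs.reflectionPerm j) ^ k) (t, ε) =
      ((σ i * σ j) ^ k * t * (σ j * σ i) ^ k,
        (∏ l ∈ Finset.range (2 * k), flipSign t ((σ j * σ i) ^ l * σ j)) * ε) := by
  have hq : σ i * σ j = (σ j * σ i)⁻¹ := by simp
  induction k generalizing t ε with
  | zero => simp
  | succ k ih =>
    rw [pow_succ, Equiv.Perm.mul_apply, reflectionPerm_mul_apply, ih, hq]
    set q := σ j * σ i
    have hshift (l : ℕ) :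
        flipSign (q⁻¹ * t * q) (q ^ l * σ j) = flipSign t (q ^ (l + 2) * σ j) := by
      have h := flipSign_conj q⁻¹ t (q ^ l * σ j)
      rw [inv_inv] at h
      rw [h, ← hq]
      congr 1
      have hj : σ j * (σ i * σ j) = q * σ j := by rw [← mul_assoc]
      simp only [mul_assoc, hj]
      group
    simp only [hshift, Prod.mk.injEq]
    constructor
    · group
    · rw [show 2 * (k + 1) = 2 * k + 1 + 1 by ring, Finset.prod_range_succ',
        Finset.prod_range_succ']
      simp only [zero_add, pow_zero, one_mul, pow_one]
      ac_rfl

lemma isLiftable_reflectionPerm : M.IsLiftable cs.reflectionPerm := by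
  intro i j
  ext ⟨t, ε⟩ : 1
  have hperiod (l : ℕ) : (σ j * σ i) ^ (M i j + l) = (σ j * σ i) ^ l := by
    rw [pow_add, simple_mul_simple_pow', one_mul]
  rw [reflectionPerm_mul_pow_apply, two_mul, Finset.prod_range_add]
  simp only [hperiod, Int.units_mul_self, simple_mul_simple_pow, simple_mul_simple_pow',
    one_mul, mul_one, Equiv.Perm.one_apply]

noncomputable def reflectionRep : W →* Equiv.Perm (W × ℤˣ) :=
  cs.lift ⟨cs.reflectionPerm, cs.isLiftable_reflectionPerm⟩

lemma reflectionRep_simple (i : B) : cs.reflectionRep (σ i) = cs.reflectionPerm i :=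
  cs.lift_apply_simple cs.isLiftable_reflectionPerm i

lemma reflectionRep_wordProd_of_not_mem {ω : List B} {t : W} (ht : t ∉ ris ω) (ε : ℤˣ) :
    cs.reflectionRep (π ω) (t, ε) = (π ω * t * (π ω)⁻¹, ε) := by
  induction ω generalizing ε with
  | nil => simp
  | cons i ω ih =>
    simp only [rightInvSeq, List.mem_cons, not_or] at ht
    have hflip : flipSign (π ω * t * (π ω)⁻¹) (σ i) = 1 := by
      rw [flipSign_conj, flipSign, if_neg ht.1]
    rw [wordProd_cons, map_mul, Equiv.Perm.mul_apply, ih ht.2, reflectionRep_simple,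
      reflectionPerm_apply, hflip, one_mul, mul_inv_rev, inv_simple]
    simp only [mul_assoc]

theorem simple_mem_rightInvSeq_of_isRightDescent {ω : List B} {i : B}
    (hi : cs.IsRightDescent (π ω) i) : σ i ∈ ris ω := by
  obtain ⟨τ, hτ, hτω⟩ := cs.exists_isReduced (π ω * σ i)
  have hωτ : π ω = π τ * σ i := by rw [← hτω, simple_mul_simple_cancel_right]
  have hτi : σ i ∉ ris τ := fun hmem => by
    have := (cs.isRightInversion_of_mem_rightInvSeq hτ hmem).2
    rw [← hτω, simple_mul_simple_cancel_right] at this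
    exact absurd hi (not_lt.mpr this.le)
  -- computed along `ω` the sign at `σ i` stays `1`, computed along `τ ++ [i]` it becomes `-1`
  by_contra hωi
  have hsign := congrArg Prod.snd (cs.reflectionRep_wordProd_of_not_mem hωi 1)
  rw [hωτ, map_mul, Equiv.Perm.mul_apply, reflectionRep_simple, reflectionPerm_apply,
    simple_mul_simple_self, one_mul, cs.reflectionRep_wordProd_of_not_mem hτi, flipSign,
    if_pos rfl, mul_one] at hsign
  exact absurd hsign (by decide : (-1 : ℤˣ) ≠ 1)

/-- `ℓ (x * π u) + u.length = ℓ x` says that `x` has a reduced expression ending in `u.reverse`. -/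
theorem length_mul_wordProd_cons {x : W} {u : List B} {i : B}
    (hu : ℓ (x * π u) + u.length = ℓ x) (hi : cs.IsRightDescent x i) (hiu : σ i ∉ lis u) :
    ℓ (x * π (i :: u)) + (u.length + 1) = ℓ x := by
  obtain ⟨κ, hκ, hκx⟩ := cs.exists_isReduced (x * π u)
  have hx : x = π (κ ++ u.reverse) := by
    rw [wordProd_append, ← hκx, wordProd_reverse, mul_inv_cancel_right]
  rw [hx] at hi
  obtain ⟨n, hn, hget⟩ :=
    List.mem_iff_getElem.mp (cs.simple_mem_rightInvSeq_of_isRightDescent hi)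
  have hnκ : n < κ.length := by
    by_contra! hκn
    obtain ⟨d, rfl⟩ := Nat.exists_eq_add_of_le hκn
    apply hiu
    have hdrop : σ i ∈ (ris (κ ++ u.reverse)).drop κ.length := by
      rw [← hget, ← List.getElem_drop (h := by simpa using hn)]
      exact List.getElem_mem _
    rwa [← rightInvSeq_drop, List.drop_left, rightInvSeq_reverse, List.mem_reverse] at hdrop
  have hxi : x * σ i * π u = π (κ.eraseIdx n) := by
    rw [hx, ← hget, ← List.getD_eq_getElem _ 1, wordProd_mul_getD_rightInvSeq,
      List.eraseIdx_append_of_lt_length hnκ, wordProd_append, wordProd_reverse,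
      inv_mul_cancel_right]
  have hle : ℓ (x * π (i :: u)) + 1 ≤ κ.length := by
    rw [wordProd_cons, ← mul_assoc, hxi]
    calc ℓ (π (κ.eraseIdx n)) + 1 ≤ (κ.eraseIdx n).length + 1 :=
          Nat.add_le_add_right (cs.length_wordProd_le _) 1
      _ = κ.length := List.length_eraseIdx_add_one hnκ
  have hge := cs.length_le_length_mul_add_right x (π (i :: u))
  have hword := cs.length_wordProd_le (i :: u)
  have hκlen := hκ.eq
  rw [← hκx] at hκlen
  simp only [List.length_cons] at hword
  omega

theorem length_mul_simple_mul_simple {x : W} {a b : B} (ha : cs.IsRightDescent x a)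
    (hb : cs.IsRightDescent x b) (hab : σ a ≠ σ b) :
    ℓ (x * σ a * σ b) + 2 = ℓ x := by
  have h1 := cs.length_mul_wordProd_cons (u := []) (by simp) hb (by simp)
  have h2 := cs.length_mul_wordProd_cons h1 ha (by simpa using hab)
  simpa [wordProd_cons, mul_assoc] using h2

theorem length_mul_simple_mul_simple_mul_simple_mul_simple {x : W} {a b : B}
    (ha : cs.IsRightDescent x a) (hb : cs.IsRightDescent x b)
    (hab : ∀ n, 0 < n → n < 4 → (σ a * σ b) ^ n ≠ 1) :
    ℓ (x * σ a * σ b * σ a * σ b) + 4 = ℓ x := by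
  have hab₁ : σ a ≠ σ b := fun h => hab 1 one_pos (by norm_num) (by simp [h])
  have hba₂ : σ b ≠ σ a * (σ b * σ a) := fun h => hab 2 two_pos (by norm_num) <| by
    rw [sq, ← mul_assoc, mul_assoc (σ a), ← h, simple_mul_simple_self]
  have hab₂ : σ a ≠ σ b * (σ a * σ b) := fun h => hab 2 two_pos (by norm_num) <| by
    rw [sq, mul_assoc, ← h, simple_mul_simple_self]
  have hab₃ : σ a ≠ σ b * (σ a * (σ b * (σ a * σ b))) := fun h =>
    hab 3 three_pos (by norm_num) <| by
      simp only [pow_succ, pow_zero, one_mul, mul_assoc]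
      rw [← h, simple_mul_simple_self]
  have h1 := cs.length_mul_wordProd_cons (u := []) (by simp) hb (by simp)
  have h2 := cs.length_mul_wordProd_cons h1 ha (by simpa using hab₁)
  have h3 := cs.length_mul_wordProd_cons h2 hb <| by
    simp [leftInvSeq, mul_assoc, hab₁.symm, hba₂]
  have h4 := cs.length_mul_wordProd_cons h3 ha <| by
    simp [leftInvSeq, mul_assoc, hab₁, hab₂, hab₃]
  simpa [wordProd_cons, mul_assoc] using h4

theorem not_isRightDescent_of_isRightDescent_mul_simple {s a b : B}
    (hsa : ∀ n, 0 < n → n < 4 → (σ s * σ a) ^ n ≠ 1)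
    (hsb : ∀ n, 0 < n → n < 4 → (σ s * σ b) ^ n ≠ 1) (hab : σ a ≠ σ b) {x : W}
    (hs : cs.IsRightDescent x s) (hb : cs.IsRightDescent (x * σ s) b) :
    ¬ cs.IsRightDescent x a := by
  induction hx : ℓ x using Nat.strong_induction_on generalizing x a b with
  | _ n ih =>
  intro ha
  have h4 := cs.length_mul_simple_mul_simple_mul_simple_mul_simple hs ha hsa
  -- each factor changes the length by one, so `h4` fixes all intermediate lengths
  have := cs.length_mul_simple x s
  have := cs.length_mul_simple (x * σ s) a
  have := cs.length_mul_simple (x * σ s * σ a) s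
  have := cs.length_mul_simple (x * σ s * σ a * σ s) a
  have hxs : ℓ (x * σ s) < ℓ x := hs
  have ha' : cs.IsRightDescent (x * σ s) a := by
    rw [IsRightDescent]; omega
  have h2 := cs.length_mul_simple_mul_simple ha' hb hab
  refine ih _ ?_ hsb hsa hab.symm (x := x * σ s * σ a) ?_ ?_ rfl ?_
  · omega
  · rw [IsRightDescent]; omega
  · rw [IsRightDescent]; omega
  · rw [IsRightDescent]; omega

theorem not_isRightDescent_of_eq_mul_simple_mul_simple_mul_simple {s a b : B}
    (hsa : ∀ n, 0 < n → n < 4 → (σ s * σ a) ^ n ≠ 1)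
    (hsb : ∀ n, 0 < n → n < 4 → (σ s * σ b) ^ n ≠ 1) (hab : σ a ≠ σ b) {w w₁ : W}
    (hw : w = w₁ * σ b * σ s * σ b) (hlen : ℓ w = ℓ w₁ + 3) :
    ¬ cs.IsRightDescent w a := by
  intro ha
  have hwb : w * σ b = w₁ * σ b * σ s := by rw [hw, simple_mul_simple_cancel_right]
  have := cs.length_mul_simple w₁ b
  have := cs.length_mul_simple (w₁ * σ b) s
  have := cs.length_mul_simple (w₁ * σ b * σ s) b
  rw [← hw] at this
  have hb : cs.IsRightDescent w b := by rw [IsRightDescent, hwb]; omega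
  have h2 := cs.length_mul_simple_mul_simple hb ha hab.symm
  refine cs.not_isRightDescent_of_isRightDescent_mul_simple hsa hsb hab (x := w * σ b) ?_ ?_ ?_
  · rw [IsRightDescent, hwb, simple_mul_simple_cancel_right]; omega
  · rw [hwb, simple_mul_simple_cancel_right, IsRightDescent, simple_mul_simple_cancel_right]
    omega
  · rw [IsRightDescent, hwb]
    rw [hwb] at h2
    omega

end CoxeterSystem

namespace CoxeterRankThree

open Matrix

/-! The geometric representation of a Coxeter group with generators `r, s, t` and `m_rt = 2`,
in the basis `(α_r, α_s, α_t)` acting on columns, with `c = 2 cos (π / m_sr)` and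
`d = 2 cos (π / m_st)`. These are written `ζ + ζ⁻¹` for a primitive `2m`-th root of unity `ζ`, so
that the rotation `σ_s σ_r` has eigenvalues `ζ², ζ⁻², 1`. The matrix `swapRT` exchanges `α_r` and
`α_t`. -/

def reflR (c : ℂ) : Matrix (Fin 3) (Fin 3) ℂ := !![-1, c, 0; 0, 1, 0; 0, 0, 1]

def reflS (c d : ℂ) : Matrix (Fin 3) (Fin 3) ℂ := !![1, 0, 0; c, -1, d; 0, 0, 1]

def reflT (d : ℂ) : Matrix (Fin 3) (Fin 3) ℂ := !![1, 0, 0; 0, 1, 0; 0, d, -1]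

def swapRT : Matrix (Fin 3) (Fin 3) ℂ := !![0, 0, 1; 0, 1, 0; 1, 0, 0]

lemma reflR_mul_self (c : ℂ) : reflR c * reflR c = 1 := by
  ext i j; fin_cases i <;> fin_cases j <;> simp [reflR]

lemma reflS_mul_self (c d : ℂ) : reflS c d * reflS c d = 1 := by
  ext i j; fin_cases i <;> fin_cases j <;> simp [reflS]

lemma reflT_mul_self (d : ℂ) : reflT d * reflT d = 1 := by
  ext i j; fin_cases i <;> fin_cases j <;> simp [reflT]

lemma reflR_mul_reflT_pow_two (c d : ℂ) : (reflR c * reflT d) ^ 2 = 1 := by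
  ext i j; fin_cases i <;> fin_cases j <;> simp [sq, reflR, reflT]

lemma swapRT_mul_self : swapRT * swapRT = 1 := by
  ext i j; fin_cases i <;> fin_cases j <;> simp [swapRT]

lemma reflS_mul_reflT (c d : ℂ) :
    reflS c d * reflT d = swapRT * (reflS d c * reflR d) * swapRT := by
  ext i j; fin_cases i <;> fin_cases j <;> simp [swapRT, reflS, reflR, reflT]
  ring

lemma semiconjBy_swapRT (X : Matrix (Fin 3) (Fin 3) ℂ) :
    SemiconjBy swapRT X (swapRT * X * swapRT) := by
  rw [SemiconjBy, mul_assoc _ swapRT, swapRT_mul_self, mul_one]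

lemma reflR_ne_reflT (c d : ℂ) : reflR c ≠ reflT d := fun h => by
  have h00 := congrFun (congrFun h 0) 0
  norm_num [reflR, reflT] at h00

section Eigen

variable {m : ℕ} {ζ : ℂ}

lemma diagonal_pow_eq_one_iff (hζ : IsPrimitiveRoot ζ (2 * m)) (n : ℕ) :
    diagonal ![ζ ^ 2, ζ⁻¹ ^ 2, 1] ^ n = 1 ↔ m ∣ n := by
  rw [diagonal_pow, diagonal_eq_one, ← Nat.mul_dvd_mul_iff_left two_pos,
    ← hζ.pow_eq_one_iff_dvd, funext_iff]
  simp [Fin.forall_fin_succ, ← pow_mul, inv_pow]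

/-- Its columns are eigenvectors of `reflS (ζ + ζ⁻¹) d * reflR (ζ + ζ⁻¹)` for `ζ², ζ⁻², 1`. -/
noncomputable def eigenbasis (ζ d : ℂ) : Matrix (Fin 3) (Fin 3) ℂ :=
  !![ζ + ζ⁻¹, ζ + ζ⁻¹, d * (ζ + ζ⁻¹);
     1 + ζ ^ 2, 1 + ζ⁻¹ ^ 2, 2 * d;
     0, 0, 4 - (ζ + ζ⁻¹) ^ 2]

lemma det_eigenbasis_ne_zero (hm : 3 ≤ m) (hζ : IsPrimitiveRoot ζ (2 * m)) (d : ℂ) :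
    (eigenbasis ζ d).det ≠ 0 := by
  have hζ0 : ζ ≠ 0 := hζ.ne_zero (by omega)
  have h2 : ζ ^ 2 - 1 ≠ 0 :=
    sub_ne_zero.mpr (hζ.pow_ne_one_of_pos_of_lt two_ne_zero (by omega))
  have h4 : ζ ^ 2 + 1 ≠ 0 := fun h => hζ.pow_ne_one_of_pos_of_lt four_ne_zero (by omega) <| by
    linear_combination (ζ ^ 2 - 1) * h
  have hdet : (eigenbasis ζ d).det = (ζ ^ 2 - 1) ^ 3 * (ζ ^ 2 + 1) ^ 2 / ζ ^ 5 := by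
    rw [eigenbasis, det_fin_three]
    simp
    field_simp
    ring
  rw [hdet]
  exact div_ne_zero (mul_ne_zero (pow_ne_zero _ h2) (pow_ne_zero _ h4)) (pow_ne_zero _ hζ0)

lemma semiconjBy_eigenbasis (hζ0 : ζ ≠ 0) (d : ℂ) :
    SemiconjBy (eigenbasis ζ d) (diagonal ![ζ ^ 2, ζ⁻¹ ^ 2, 1])
      (reflS (ζ + ζ⁻¹) d * reflR (ζ + ζ⁻¹)) := by
  rw [SemiconjBy]
  ext i j
  fin_cases i <;> fin_cases j <;> simp [eigenbasis, reflS, reflR] <;> field_simp <;> ring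

theorem reflS_mul_reflR_pow_eq_one_iff (hm : 3 ≤ m) (hζ : IsPrimitiveRoot ζ (2 * m)) (d : ℂ)
    (n : ℕ) :
    (reflS (ζ + ζ⁻¹) d * reflR (ζ + ζ⁻¹)) ^ n = 1 ↔ m ∣ n := by
  rw [← (semiconjBy_eigenbasis (hζ.ne_zero (by omega)) d).pow_eq_one_iff
    ((isUnit_iff_isUnit_det _).mpr (det_eigenbasis_ne_zero hm hζ d).isUnit),
    diagonal_pow_eq_one_iff hζ]

end Eigen

end CoxeterRankThree

namespace CoxeterSystem

open CoxeterRankThree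

variable {B W : Type*} [Group W] {M : CoxeterMatrix B} (cs : CoxeterSystem M W)

local prefix:100 "σ" => cs.simple

section RankThree

variable {r s t : B} (hB : ∀ i, i = r ∨ i = s ∨ i = t) (hrs : r ≠ s) (hrt : r ≠ t)
  (hst : s ≠ t) (mrt : M r t = 2) (msr : 3 ≤ M s r) (mst : 3 ≤ M s t)
include hB hrs hrt hst mrt msr mst

theorem exists_monoidHom_matrix_rankThree : ∃ ζ ξ : ℂ, IsPrimitiveRoot ζ (2 * M s r) ∧
    IsPrimitiveRoot ξ (2 * M s t) ∧ ∃ ρ : W →* Matrix (Fin 3) (Fin 3) ℂ,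
      ρ (σ r) = reflR (ζ + ζ⁻¹) ∧ ρ (σ s) = reflS (ζ + ζ⁻¹) (ξ + ξ⁻¹) ∧
        ρ (σ t) = reflT (ξ + ξ⁻¹) := by
  obtain ⟨ζ, hζ⟩ : ∃ ζ : ℂ, IsPrimitiveRoot ζ (2 * M s r) :=
    ⟨_, Complex.isPrimitiveRoot_exp _ (by omega)⟩
  obtain ⟨ξ, hξ⟩ : ∃ ξ : ℂ, IsPrimitiveRoot ξ (2 * M s t) :=
    ⟨_, Complex.isPrimitiveRoot_exp _ (by omega)⟩
  classical
  let f : B → Matrix (Fin 3) (Fin 3) ℂ := fun i =>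
    if i = r then reflR (ζ + ζ⁻¹)
    else if i = s then reflS (ζ + ζ⁻¹) (ξ + ξ⁻¹)
    else reflT (ξ + ξ⁻¹)
  have hfr : f r = reflR (ζ + ζ⁻¹) := if_pos rfl
  have hfs : f s = reflS (ζ + ζ⁻¹) (ξ + ξ⁻¹) := by simp [f, hrs.symm]
  have hft : f t = reflT (ξ + ξ⁻¹) := by simp [f, hrt.symm, hst.symm]
  have hf : M.IsLiftable f := by
    refine M.isLiftable_of_forall_eq_or_eq_or_eq hB (fun i => ?_) ?_ ?_ ?_
    · rcases hB i with rfl | rfl | rfl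
      · rw [hfr, reflR_mul_self]
      · rw [hfs, reflS_mul_self]
      · rw [hft, reflT_mul_self]
    · rw [hfs, hfr, reflS_mul_reflR_pow_eq_one_iff msr hζ]
    · rw [hfs, hft, reflS_mul_reflT, ← (semiconjBy_swapRT _).pow_eq_one_iff
        (isUnit_iff_exists.mpr ⟨_, swapRT_mul_self, swapRT_mul_self⟩),
        reflS_mul_reflR_pow_eq_one_iff mst hξ]
    · rw [hfr, hft, mrt, reflR_mul_reflT_pow_two]
  exact ⟨ζ, ξ, hζ, hξ, cs.lift ⟨f, hf⟩, by rw [lift_apply_simple, hfr],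
    by rw [lift_apply_simple, hfs], by rw [lift_apply_simple, hft]⟩

theorem orderOf_simple_mul_simple_left : orderOf (σ s * σ r) = M s r := by
  obtain ⟨ζ, ξ, hζ, -, ρ, hr, hs, -⟩ :=
    cs.exists_monoidHom_matrix_rankThree hB hrs hrt hst mrt msr mst
  refine Nat.dvd_antisymm (orderOf_dvd_of_pow_eq_one (cs.simple_mul_simple_pow s r)) ?_
  rw [← reflS_mul_reflR_pow_eq_one_iff msr hζ (ξ + ξ⁻¹), ← hr, ← hs, ← map_mul, ← map_pow,
    pow_orderOf_eq_one, map_one]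

theorem orderOf_simple_mul_simple_right : orderOf (σ s * σ t) = M s t := by
  obtain ⟨ζ, ξ, -, hξ, ρ, -, hs, ht⟩ :=
    cs.exists_monoidHom_matrix_rankThree hB hrs hrt hst mrt msr mst
  refine Nat.dvd_antisymm (orderOf_dvd_of_pow_eq_one (cs.simple_mul_simple_pow s t)) ?_
  rw [← reflS_mul_reflR_pow_eq_one_iff mst hξ (ζ + ζ⁻¹), (semiconjBy_swapRT _).pow_eq_one_iff
    (isUnit_iff_exists.mpr ⟨_, swapRT_mul_self, swapRT_mul_self⟩), ← reflS_mul_reflT, ← hs,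
    ← ht, ← map_mul, ← map_pow, pow_orderOf_eq_one, map_one]

theorem simple_ne_simple_of_rankThree : σ r ≠ σ t := by
  obtain ⟨ζ, ξ, -, -, ρ, hr, -, ht⟩ :=
    cs.exists_monoidHom_matrix_rankThree hB hrs hrt hst mrt msr mst
  exact fun h => reflR_ne_reflT _ _ (by rw [← hr, ← ht, h])

end RankThree

end CoxeterSystem

theorem stmt8_general {B : Type*} {W : Type*} [Group W] {M : CoxeterMatrix B}
    (cs : CoxeterSystem M W) (r s t : B)
    (hrs : r ≠ s) (hrt : r ≠ t) (hst : s ≠ t)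
    (hB : ∀ i : B, i = r ∨ i = s ∨ i = t)
    (mrt : M r t = 2) (msr : 5 ≤ M s r) (mst : 4 ≤ M s t)
    (w : W) :
    (∀ w₁ : W, w = w₁ * cs.simple t * cs.simple s * cs.simple t → cs.length w = cs.length w₁ + 3 →
      ¬ cs.IsRightDescent w r) ∧
    (∀ w₁ : W, w = w₁ * cs.simple r * cs.simple s * cs.simple r → cs.length w = cs.length w₁ + 3 →
      ¬ cs.IsRightDescent w t) := by
  have hosr : orderOf (cs.simple s * cs.simple r) = M s r :=
    cs.orderOf_simple_mul_simple_left hB hrs hrt hst mrt (by omega) (by omega)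
  have host : orderOf (cs.simple s * cs.simple t) = M s t :=
    cs.orderOf_simple_mul_simple_right hB hrs hrt hst mrt (by omega) (by omega)
  have hσrt : cs.simple r ≠ cs.simple t :=
    cs.simple_ne_simple_of_rankThree hB hrs hrt hst mrt (by omega) (by omega)
  have hsr₄ : ∀ n, 0 < n → n < 4 → (cs.simple s * cs.simple r) ^ n ≠ 1 :=
    fun n hn hn₄ => pow_ne_one_of_lt_orderOf hn.ne' (by omega)
  have hst₄ : ∀ n, 0 < n → n < 4 → (cs.simple s * cs.simple t) ^ n ≠ 1 :=
    fun n hn hn₄ => pow_ne_one_of_lt_orderOf hn.ne' (by omega)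
  exact ⟨fun _ => cs.not_isRightDescent_of_eq_mul_simple_mul_simple_mul_simple hsr₄ hst₄ hσrt,
    fun _ => cs.not_isRightDescent_of_eq_mul_simple_mul_simple_mul_simple hst₄ hsr₄ hσrt.symm⟩

/-- if w = w₁·tst then r ∉ R(w); if w = w₁·rsr then t ∉ R(w). -/
theorem stmt8 {B : Type*} {W : Type*} [Group W] {M : CoxeterMatrix B}
    (cs : CoxeterSystem M W) (r s t : B)
    (hrs : r ≠ s) (hrt : r ≠ t) (hst : s ≠ t)
    (hB : ∀ i : B, i = r ∨ i = s ∨ i = t)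
    (mrt : M r t = 2) (msr : 5 ≤ M s r) (mst : 4 ≤ M s t) (mstsr : M s t ≤ M s r)
    (w : W) :
    (∀ w₁ : W, w = w₁ * cs.simple t * cs.simple s * cs.simple t → cs.length w = cs.length w₁ + 3 →
      ¬ cs.IsRightDescent w r) ∧
    (∀ w₁ : W, w = w₁ * cs.simple r * cs.simple s * cs.simple r → cs.length w = cs.length w₁ + 3 →
      ¬ cs.IsRightDescent w t) :=
  stmt8_general cs r s t hrs hrt hst hB mrt msr mst w
end

section
/- There exist no w, w₁, w₂ ∈ W such that w = w₁st with ℓ(w) = ℓ(w₁) + 2 and simultaneously w = w₂sr with ℓ(w) = ℓ(w₂) + 2. -/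
/-!
Work in the geometric representation of `W` on `ℝ^B`, which preserves the cosine form
`B(αᵢ, αⱼ) = -cos (π / mᵢⱼ)`. A root `w αᵢ` is positive exactly when `i` is not a right descent
of `w`, and `w` sends only finitely many positive roots to negative ones: such a root is
determined by the position in a word for `w` at which it last changes sign.

If `w = w₁ s t = w₂ s r` with lengths adding, then `s` is a right descent of `w t` and of `w r`,
so `w` sends both `β₁ = t αₛ = αₛ + αₜ` and `β₂ = r αₛ = αₛ + 2 cos (π / mₛᵣ) αᵣ` to negative
roots. Since `mₛᵣ ≥ 8`, `B(β₁, β₂) = 1/2 - 2 cos² (π / mₛᵣ) < -1`, so the reflections in `β₁` and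
`β₂` generate an infinite dihedral group; the orbit of `β₁` under it consists of infinitely
many nonnegative combinations of `β₁` and `β₂`, all of them positive roots made negative by `w`.
-/

noncomputable section

namespace CoxeterSystem

variable {B : Type*} {W : Type*} [Group W] {M : CoxeterMatrix B} (cs : CoxeterSystem M W)

local prefix:100 "s" => cs.simple
local prefix:100 "π" => cs.wordProd
local prefix:100 "ℓ" => cs.length

lemma prod_map_alternatingWord_two_mul {G : Type*} [Monoid G] (f : B → G) (i j : B) (k : ℕ) :
    ((alternatingWord i j (2 * k)).map f).prod = (f i * f j) ^ k := by
  induction k with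
  | zero => simp [alternatingWord]
  | succ k ih =>
    rw [show 2 * (k + 1) = 2 * k + 1 + 1 by ring, alternatingWord_succ', alternatingWord_succ']
    simp [ih, pow_succ', mul_assoc]

lemma wordProd_alternatingWord_succ_swap (i j : B) (n : ℕ) :
    π (alternatingWord j i (n + 1)) = π (alternatingWord i j n) * s i := by
  rw [alternatingWord_succ, wordProd_concat]

lemma wordProd_alternatingWord_eq_swap (i j : B) :
    π (alternatingWord i j (M i j)) = π (alternatingWord j i (M i j)) := by
  have h := cs.wordProd_braidWord_eq i j
  rwa [braidWord, braidWord, M.symmetric j i] at h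

lemma simple_mul_wordProd_alternatingWord {i j x : B} (hij : 2 ≤ M i j) (hx : x = i ∨ x = j)
    {n : ℕ} (hn : n ≤ M i j) : ∃ n' ≤ M i j, n' ≤ n + 1 ∧
      (s x * π (alternatingWord i j n) = π (alternatingWord i j n') ∨
        s x * π (alternatingWord i j n) = π (alternatingWord j i n')) := by
  rcases Nat.eq_zero_or_pos n with rfl | hpos
  · refine ⟨1, by omega, le_rfl, ?_⟩
    rcases hx with rfl | rfl <;> simp [alternatingWord]
  obtain ⟨k, rfl⟩ : ∃ k, n = k + 1 := ⟨n - 1, by omega⟩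
  -- the alternating word of length `k + 1` starts with `y` and is extended on the left by `z`
  set y : B := if Even k then j else i with hy
  set z : B := if Even k then i else j with hz
  have hxyz : x = y ∨ x = z := by
    rcases hx with rfl | rfl <;> by_cases hk : Even k <;> simp [hy, hz, hk]
  rcases hxyz with rfl | rfl
  · refine ⟨k, by omega, by omega, Or.inl ?_⟩
    rw [alternatingWord_succ', wordProd_cons, ← mul_assoc, simple_mul_simple_self, one_mul]
  rcases Nat.lt_or_ge (k + 1) (M i j) with hlt | hge
  · refine ⟨k + 2, hlt, le_rfl, Or.inl ?_⟩
    rw [alternatingWord_succ' i j (k + 1), wordProd_cons]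
    congr 2
    by_cases hk : Even k <;> simp [hz, hk, parity_simps]
  · have hm : k + 1 = M i j := by omega
    refine ⟨k, by omega, by omega, Or.inr ?_⟩
    rw [hm, wordProd_alternatingWord_eq_swap, ← hm, alternatingWord_succ', wordProd_cons,
      ← mul_assoc]
    by_cases hk : Even k <;> simp [hz, hk]

lemma exists_wordProd_eq_wordProd_alternatingWord {i j : B} (hij : 2 ≤ M i j) (ω : List B)
    (hω : ∀ x ∈ ω, x = i ∨ x = j) : ∃ n ≤ M i j, n ≤ ω.length ∧
      (π ω = π (alternatingWord i j n) ∨ π ω = π (alternatingWord j i n)) := by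
  induction ω with
  | nil => exact ⟨0, by omega, le_rfl, Or.inl rfl⟩
  | cons x ω ih =>
    obtain ⟨n, hnM, hnlen, h | h⟩ := ih fun y hy => hω y (List.mem_cons_of_mem _ hy)
    all_goals rw [wordProd_cons, h]
    · obtain ⟨n', hn'M, hn'n, hx⟩ :=
        cs.simple_mul_wordProd_alternatingWord hij (hω x List.mem_cons_self) hnM
      exact ⟨n', hn'M, by rw [List.length_cons]; omega, hx⟩
    · rw [M.symmetric] at hij hnM
      obtain ⟨n', hn'M, hn'n, hx⟩ :=
        cs.simple_mul_wordProd_alternatingWord hij (hω x List.mem_cons_self).symm hnM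
      exact ⟨n', M.symmetric i j ▸ hn'M, by rw [List.length_cons]; omega, hx.symm⟩

lemma exists_eq_mul_wordProd_pair (i j : B) (w : W) :
    ∃ u ω, (∀ x ∈ ω, x = i ∨ x = j) ∧ w = u * π ω ∧ ℓ w = ℓ u + ω.length ∧
      ¬ cs.IsRightDescent u i ∧ ¬ cs.IsRightDescent u j := by
  induction h : ℓ w using Nat.strong_induction_on generalizing w with
  | _ N ih =>
  by_cases hd : ∃ x, (x = i ∨ x = j) ∧ cs.IsRightDescent w x
  · obtain ⟨x, hx, hwx⟩ := hd
    have hlen := (cs.length_mul_simple w x).resolve_left (by unfold IsRightDescent at hwx; omega)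
    obtain ⟨u, ω, hω, hu, hlen', hui, huj⟩ := ih _ (by omega) (w * s x) rfl
    refine ⟨u, ω ++ [x], ?_, ?_, ?_, hui, huj⟩
    · simpa [or_imp, forall_and] using ⟨hω, hx⟩
    · rw [wordProd_append, wordProd_singleton, ← mul_assoc, ← hu, simple_mul_simple_cancel_right]
    · rw [List.length_append, List.length_singleton]
      omega
  · push Not at hd
    exact ⟨w, [], by simp, by simp, by simp [h], hd i (Or.inl rfl), hd j (Or.inr rfl)⟩

lemma isRightDescent_mul_wordProd_alternatingWord {u : W} {i j : B} {n : ℕ}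
    (hlen : ℓ (u * π (alternatingWord j i (n + 1))) = ℓ u + (n + 1)) :
    cs.IsRightDescent (u * π (alternatingWord j i (n + 1))) i := by
  rw [IsRightDescent, wordProd_alternatingWord_succ_swap, ← mul_assoc,
    simple_mul_simple_cancel_right]
  have h₁ := cs.length_mul_le u (π (alternatingWord i j n))
  have h₂ := cs.length_wordProd_le (alternatingWord i j n)
  rw [wordProd_alternatingWord_succ_swap, ← mul_assoc] at hlen
  rw [length_alternatingWord] at h₂
  omega

lemma exists_eq_mul_wordProd_alternatingWord {w : W} {i j : B} (hij : 2 ≤ M i j)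
    (hwi : ¬ cs.IsRightDescent w i) : ∃ u n, n < M i j ∧ w = u * π (alternatingWord i j n) ∧
      ℓ w = ℓ u + n ∧ ¬ cs.IsRightDescent u i ∧ ¬ cs.IsRightDescent u j := by
  obtain ⟨u, ω, hω, rfl, hlen, hui, huj⟩ := cs.exists_eq_mul_wordProd_pair i j w
  obtain ⟨n, hnM, hnω, hn⟩ := cs.exists_wordProd_eq_wordProd_alternatingWord hij ω hω
  have hlen' : ℓ (u * π ω) = ℓ u + n := by
    have h₁ := cs.length_mul_le u (π ω)
    have h₂ : ℓ (π ω) ≤ n := by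
      rcases hn with hn | hn <;> rw [hn] <;>
        exact (cs.length_wordProd_le _).trans (length_alternatingWord _ _ _).le
    omega
  rcases hn with hn | hn <;> rw [hn] at hlen' hwi ⊢
  · refine ⟨u, n, lt_of_le_of_ne hnM ?_, rfl, hlen', hui, huj⟩
    rintro rfl
    obtain ⟨k, hk⟩ : ∃ k, M i j = k + 1 := ⟨M i j - 1, by omega⟩
    rw [wordProd_alternatingWord_eq_swap, hk] at hlen' hwi
    exact hwi (cs.isRightDescent_mul_wordProd_alternatingWord hlen')
  · rcases n with _ | k
    · exact ⟨u, 0, by omega, rfl, hlen', hui, huj⟩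
    · exact absurd (cs.isRightDescent_mul_wordProd_alternatingWord hlen') hwi

lemma isRightDescent_mul_simple_of_length_eq {w w' : W} {i j : B} (hw : w = w' * s i * s j)
    (hlen : ℓ w = ℓ w' + 2) : cs.IsRightDescent (w * s j) i := by
  rw [hw, simple_mul_simple_cancel_right, IsRightDescent, simple_mul_simple_cancel_right]
  have := cs.length_mul_le (w' * s i) (s j)
  rw [← hw, length_simple] at this
  omega

end CoxeterSystem

open Real

def sinRatio (θ : ℝ) (n : ℕ) : ℝ := sin (n * θ) / sin θ

lemma sinRatio_add_two (θ : ℝ) (n : ℕ) :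
    sinRatio θ (n + 2) = 2 * cos θ * sinRatio θ (n + 1) - sinRatio θ n := by
  have h₁ : ((n + 2 : ℕ) : ℝ) * θ = ((n + 1 : ℕ) : ℝ) * θ + θ := by push_cast; ring
  have h₂ : (n : ℝ) * θ = ((n + 1 : ℕ) : ℝ) * θ - θ := by push_cast; ring
  simp only [sinRatio]
  rw [h₁, h₂, sin_add, sin_sub]
  ring

lemma sin_pi_div_natCast_pos {m : ℕ} (hm : 2 ≤ m) : 0 < sin (π / m) := by
  have : (2 : ℝ) ≤ m := by exact_mod_cast hm
  apply sin_pos_of_pos_of_lt_pi (by positivity)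
  rw [div_lt_iff₀ (by positivity)]
  nlinarith [pi_pos]

lemma cos_pi_div_natCast_nonneg {m : ℕ} (hm : m ≠ 1) : 0 ≤ cos (π / m) := by
  rcases Nat.eq_zero_or_pos m with rfl | hpos
  · simp
  have : (2 : ℝ) ≤ m := by exact_mod_cast (show 2 ≤ m by omega)
  have : 0 ≤ π / m := by positivity
  refine cos_nonneg_of_mem_Icc ⟨by linarith [pi_pos], ?_⟩
  rw [div_le_div_iff₀ (by positivity) (by norm_num)]
  nlinarith [pi_pos]

lemma sinRatio_nonneg {m n : ℕ} (hm : 2 ≤ m) (hn : n ≤ m) : 0 ≤ sinRatio (π / m) n := by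
  have hm' : (0 : ℝ) < m := by positivity
  refine div_nonneg (sin_nonneg_of_nonneg_of_le_pi (by positivity) ?_)
    (sin_pi_div_natCast_pos hm).le
  rw [mul_div_assoc', div_le_iff₀ hm', mul_comm π]
  exact mul_le_mul_of_nonneg_right (by exact_mod_cast hn : (n : ℝ) ≤ m) pi_pos.le

lemma sinRatio_pos {m n : ℕ} (hm : 2 ≤ m) (h0 : 0 < n) (hn : n < m) : 0 < sinRatio (π / m) n := by
  have hm' : (0 : ℝ) < m := by positivity
  refine div_pos (sin_pos_of_pos_of_lt_pi (by positivity) ?_) (sin_pi_div_natCast_pos hm)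
  rw [mul_div_assoc', div_lt_iff₀ hm', mul_comm π]
  exact mul_lt_mul_of_pos_right (by exact_mod_cast hn : (n : ℝ) < m) pi_pos

lemma three_quarters_lt_cos_pi_div_sq {m : ℕ} (hm : 7 ≤ m) : 3 / 4 < cos (π / m) ^ 2 := by
  have hm' : (7 : ℝ) ≤ m := by exact_mod_cast hm
  have hlt : cos (π / 6) < cos (π / m) := by
    refine cos_lt_cos_of_nonneg_of_le_pi (by positivity) (by linarith [pi_pos]) ?_
    rw [div_lt_div_iff₀ (by positivity) (by norm_num)]
    nlinarith [pi_pos]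
  have hsq : sqrt 3 ^ 2 = 3 := sq_sqrt (by norm_num)
  rw [cos_pi_div_six] at hlt
  nlinarith [sqrt_nonneg 3]

/-- `dihedralSeq γ n = U_{n-1}(γ)`, a Chebyshev polynomial of the second kind. -/
def dihedralSeq (γ : ℝ) : ℕ → ℝ
  | 0 => 0
  | 1 => 1
  | n + 2 => 2 * γ * dihedralSeq γ (n + 1) - dihedralSeq γ n

lemma dihedralSeq_nonneg_and_lt {γ : ℝ} (hγ : 1 ≤ γ) (n : ℕ) :
    0 ≤ dihedralSeq γ n ∧ dihedralSeq γ n < dihedralSeq γ (n + 1) := by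
  induction n with
  | zero => simp [dihedralSeq]
  | succ n ih =>
    obtain ⟨h₀, h₁⟩ := ih
    refine ⟨by linarith, ?_⟩
    simp only [dihedralSeq]
    nlinarith

lemma strictMono_dihedralSeq {γ : ℝ} (hγ : 1 ≤ γ) : StrictMono (dihedralSeq γ) :=
  strictMono_nat_of_lt_succ fun n => (dihedralSeq_nonneg_and_lt hγ n).2

lemma pow_apply_eq_dihedralSeq {V : Type*} [AddCommGroup V] [Module ℝ V] (g : V ≃ₗ[ℝ] V)
    {β₁ β₂ : V} {γ : ℝ} (h₁ : g β₁ = (4 * γ ^ 2 - 1) • β₁ + (2 * γ) • β₂)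
    (h₂ : g β₂ = (-(2 * γ)) • β₁ - β₂) (k : ℕ) :
    (g ^ k) β₁ = dihedralSeq γ (2 * k + 1) • β₁ + dihedralSeq γ (2 * k) • β₂ := by
  induction k with
  | zero => simp [dihedralSeq]
  | succ k ih =>
    rw [pow_succ', LinearEquiv.mul_apply, ih, map_add, map_smul, map_smul, h₁, h₂,
      show 2 * (k + 1) + 1 = 2 * k + 1 + 2 by ring, show 2 * (k + 1) = 2 * k + 2 by ring]
    simp only [dihedralSeq]
    module

lemma Pi.single_one_pos {B : Type*} [DecidableEq B] (i : B) : (0 : B → ℝ) < Pi.single i 1 :=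
  lt_of_le_of_ne (Pi.single_nonneg.2 zero_le_one) fun h => by simpa using congrFun h i

namespace CoxeterMatrix

open CoxeterSystem (alternatingWord alternatingWord_succ' prod_map_alternatingWord_two_mul)

lemma two_le_of_ne {B : Type*} (M : CoxeterMatrix B) {i j : B} (hM : M i j ≠ 0) (hij : i ≠ j) :
    2 ≤ M i j := by
  have := M.off_diagonal i j hij
  omega

variable {B : Type*} [Fintype B] [DecidableEq B] (M : CoxeterMatrix B)

/-- When `M i j = 0` (no relation), Lean's `π / 0 = 0` gives the entry `-1`, the usual value for
`m = ∞`. -/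
def cosMatrix : Matrix B B ℝ := Matrix.of fun i j => -cos (π / M i j)

def cosForm : LinearMap.BilinForm ℝ (B → ℝ) := Matrix.toBilin' M.cosMatrix

@[simp]
lemma cosForm_single (i j : B) :
    M.cosForm (Pi.single i 1) (Pi.single j 1) = -cos (π / M i j) := by
  simp [cosForm, cosMatrix]

lemma cosForm_comm (u v : B → ℝ) : M.cosForm u v = M.cosForm v u :=
  (Matrix.isSymm_toBilin'_iff_isSymm.2 <| Matrix.IsSymm.ext fun i j => by
    simp [cosMatrix, M.symmetric i j]).eq u v

def geomRefl (i : B) : (B → ℝ) ≃ₗ[ℝ] (B → ℝ) :=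
  Module.reflection (x := Pi.single i 1) (f := 2 • M.cosForm (Pi.single i 1)) (by simp)

lemma geomRefl_apply (i : B) (v : B → ℝ) :
    M.geomRefl i v = v - (2 * M.cosForm (Pi.single i 1) v) • Pi.single i 1 := by
  simp [geomRefl, Module.reflection_apply]

lemma geomRefl_single (i j : B) :
    M.geomRefl i (Pi.single j 1) = Pi.single j 1 + (2 * cos (π / M i j)) • Pi.single i 1 := by
  rw [geomRefl_apply, cosForm_single]; module

@[simp]
lemma geomRefl_single_self (i : B) : M.geomRefl i (Pi.single i 1) = -Pi.single i 1 := by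
  rw [geomRefl_single, M.diagonal, Nat.cast_one, div_one, cos_pi]; module

@[simp]
lemma geomRefl_mul_self (i : B) : M.geomRefl i * M.geomRefl i = 1 :=
  LinearEquiv.ext (Module.involutive_reflection _)

@[simp]
lemma geomRefl_inv (i : B) : (M.geomRefl i)⁻¹ = M.geomRefl i :=
  inv_eq_of_mul_eq_one_right (M.geomRefl_mul_self i)

lemma geomRefl_apply_eq_self {i : B} {v : B → ℝ} (h : M.cosForm (Pi.single i 1) v = 0) :
    M.geomRefl i v = v := by
  simp [geomRefl_apply, h]

lemma cosForm_geomRefl (i : B) (u v : B → ℝ) :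
    M.cosForm (M.geomRefl i u) (M.geomRefl i v) = M.cosForm u v := by
  simp only [geomRefl_apply, map_sub, map_smul, LinearMap.sub_apply, LinearMap.smul_apply,
    cosForm_single, M.diagonal, Nat.cast_one, div_one, cos_pi, smul_eq_mul,
    M.cosForm_comm u (Pi.single i 1)]
  ring

lemma geomRefl_single_pos {i j : B} (hij : i ≠ j) : 0 < M.geomRefl i (Pi.single j 1) := by
  have hcos := cos_pi_div_natCast_nonneg (M.off_diagonal i j hij)
  rw [geomRefl_single]
  exact add_pos_of_pos_of_nonneg (Pi.single_one_pos j)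
    (smul_nonneg (by positivity) (Pi.single_one_pos i).le)

lemma eq_single_of_geomRefl_neg {i : B} {β : B → ℝ} (hβ : M.cosForm β β = 1) (hpos : 0 < β)
    (hneg : M.geomRefl i β < 0) : β = Pi.single i 1 := by
  obtain ⟨c, rfl⟩ : ∃ c : ℝ, β = c • Pi.single i 1 := by
    refine ⟨β i, funext fun q => ?_⟩
    rcases eq_or_ne q i with rfl | hq
    · simp
    · have h := hneg.le q
      simp only [geomRefl_apply, Pi.sub_apply, Pi.smul_apply, Pi.single_eq_of_ne hq, smul_zero,
        sub_zero, Pi.zero_apply] at h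
      simp [Pi.single_eq_of_ne hq, le_antisymm h (hpos.le q)]
  have hc : 0 ≤ c := by simpa using hpos.le i
  simp only [map_smul, LinearMap.smul_apply, cosForm_single, M.diagonal, Nat.cast_one, div_one,
    cos_pi, neg_neg, smul_eq_mul] at hβ
  rw [show c = 1 by nlinarith, one_smul]

lemma prod_map_geomRefl_alternatingWord_single {i j : B} (hij : 2 ≤ M i j) (n : ℕ) :
    ((alternatingWord i j n).map M.geomRefl).prod (Pi.single i 1) =
      sinRatio (π / M i j) (n + 1) • Pi.single (if Even n then i else j) 1 +
      sinRatio (π / M i j) n • Pi.single (if Even n then j else i) 1 := by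
  have hsin := (sin_pi_div_natCast_pos hij).ne'
  induction n with
  | zero => simp [alternatingWord, sinRatio, hsin]
  | succ n ih =>
    have hrec := sinRatio_add_two (π / M i j) n
    rw [alternatingWord_succ', List.map_cons, List.prod_cons, LinearEquiv.mul_apply, ih]
    by_cases hn : Even n <;>
    · simp only [hn, Nat.even_add_one, not_true, not_false_eq_true, if_true, if_false, map_add,
        map_smul, geomRefl_single, M.symmetric j i, M.diagonal, Nat.cast_one, div_one, cos_pi]
      rw [hrec]
      module

lemma geomRefl_mul_geomRefl_pow_apply_single {i j : B} (hij : 2 ≤ M i j) :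
    ((M.geomRefl i * M.geomRefl j) ^ M i j) (Pi.single i 1) = Pi.single i 1 := by
  have hm : (M i j : ℝ) ≠ 0 := by positivity
  have h₁ : sinRatio (π / M i j) (2 * M i j + 1) = 1 := by
    rw [sinRatio, show ((2 * M i j + 1 : ℕ) : ℝ) * (π / M i j) = π / M i j + 2 * π by
      field_simp; push_cast; ring, sin_add_two_pi, div_self (sin_pi_div_natCast_pos hij).ne']
  have h₀ : sinRatio (π / M i j) (2 * M i j) = 0 := by
    rw [sinRatio, show ((2 * M i j : ℕ) : ℝ) * (π / M i j) = 2 * π by field_simp; push_cast; ring,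
      sin_two_pi, zero_div]
  rw [← prod_map_alternatingWord_two_mul, prod_map_geomRefl_alternatingWord_single M hij, h₁, h₀]
  simp

lemma exists_cosForm_sub_eq_zero {i j : B} (hij : 2 ≤ M i j) (v : B → ℝ) :
    ∃ a b : ℝ, M.cosForm (Pi.single i 1) (v - a • Pi.single i 1 - b • Pi.single j 1) = 0 ∧
      M.cosForm (Pi.single j 1) (v - a • Pi.single i 1 - b • Pi.single j 1) = 0 := by
  set c := cos (π / M i j)
  have hc : 1 - c ^ 2 ≠ 0 := by
    rw [← sin_sq]; exact pow_ne_zero 2 (sin_pi_div_natCast_pos hij).ne'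
  refine ⟨(M.cosForm (Pi.single i 1) v + c * M.cosForm (Pi.single j 1) v) / (1 - c ^ 2),
    (M.cosForm (Pi.single j 1) v + c * M.cosForm (Pi.single i 1) v) / (1 - c ^ 2), ?_, ?_⟩ <;>
  · simp only [map_sub, map_smul, cosForm_single, M.diagonal, M.symmetric j i, smul_eq_mul]
    field_simp
    simp only [Nat.cast_one, div_one, cos_pi, c]
    ring

-- `(σᵢ σⱼ) ^ mᵢⱼ` fixes `αᵢ`, `αⱼ` and every vector orthogonal to both, and these span `ℝ^B`.
lemma geomRefl_mul_geomRefl_pow (i j : B) : (M.geomRefl i * M.geomRefl j) ^ M i j = 1 := by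
  rcases eq_or_ne i j with rfl | hne
  · simp
  rcases eq_or_ne (M i j) 0 with h | h
  · simp [h]
  have hij := M.two_le_of_ne h hne
  have hji : 2 ≤ M j i := M.symmetric j i ▸ hij
  have h_i := M.geomRefl_mul_geomRefl_pow_apply_single hij
  have h_j : ((M.geomRefl i * M.geomRefl j) ^ M i j) (Pi.single j 1) = Pi.single j 1 := by
    have h := M.geomRefl_mul_geomRefl_pow_apply_single hji
    rw [M.symmetric j i] at h
    have hinv : (M.geomRefl i * M.geomRefl j) ^ M i j =
        ((M.geomRefl j * M.geomRefl i) ^ M i j)⁻¹ := by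
      rw [← inv_pow, mul_inv_rev, geomRefl_inv, geomRefl_inv]
    rw [hinv, LinearEquiv.coe_inv, LinearEquiv.symm_apply_eq, h]
  refine LinearEquiv.ext fun v => ?_
  obtain ⟨a, b, hi, hj⟩ := M.exists_cosForm_sub_eq_zero hij v
  set x := v - a • Pi.single i 1 - b • Pi.single j 1
  have hx : ((M.geomRefl i * M.geomRefl j) ^ M i j) x = x := by
    rw [LinearEquiv.pow_apply]
    exact Function.iterate_fixed (by simp [geomRefl_apply_eq_self, hi, hj]) _
  rw [show v = x + a • Pi.single i 1 + b • Pi.single j 1 by simp only [x]; abel]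
  simp only [map_add, map_smul, hx, h_i, h_j, LinearEquiv.coe_one, id_eq]

end CoxeterMatrix

namespace CoxeterSystem

variable {B : Type*} [Fintype B] [DecidableEq B] {W : Type*} [Group W] {M : CoxeterMatrix B}
  (cs : CoxeterSystem M W)

local prefix:100 "s" => cs.simple
local prefix:100 "ℓ" => cs.length

def geomRep : W →* (B → ℝ) ≃ₗ[ℝ] (B → ℝ) :=
  cs.lift ⟨M.geomRefl, M.geomRefl_mul_geomRefl_pow⟩

@[simp]
lemma geomRep_simple (i : B) : cs.geomRep (s i) = M.geomRefl i :=
  cs.lift_apply_simple _ i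

lemma geomRep_wordProd (ω : List B) : cs.geomRep (cs.wordProd ω) = (ω.map M.geomRefl).prod := by
  simp [wordProd, map_list_prod, Function.comp_def]

lemma cosForm_geomRep (w : W) (u v : B → ℝ) :
    M.cosForm (cs.geomRep w u) (cs.geomRep w v) = M.cosForm u v := by
  induction w using cs.simple_induction_left generalizing u v with
  | one => simp
  | mul_simple_left w i ih => simp [M.cosForm_geomRefl, ih]

theorem geomRep_single_pos_of_not_isRightDescent (hM : ∀ i j, M i j ≠ 0) {w : W} {i : B}
    (hwi : ¬ cs.IsRightDescent w i) : 0 < cs.geomRep w (Pi.single i 1) := by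
  induction h : ℓ w using Nat.strong_induction_on generalizing w i with
  | _ N ih =>
  rcases eq_or_ne w 1 with rfl | hw
  · simp [Pi.single_one_pos i]
  obtain ⟨j, hwj⟩ := cs.exists_rightDescent_of_ne_one hw
  have hij : 2 ≤ M i j := M.two_le_of_ne (hM i j) (by rintro rfl; exact hwi hwj)
  obtain ⟨u, n, hn, rfl, hlen, hui, huj⟩ := cs.exists_eq_mul_wordProd_alternatingWord hij hwi
  have hn0 : 0 < n := Nat.pos_of_ne_zero fun hn => huj (by simpa [hn, alternatingWord] using hwj)
  have hu : ∀ k, k = i ∨ k = j → 0 < cs.geomRep u (Pi.single k 1) := by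
    rintro k (rfl | rfl)
    exacts [ih _ (by omega) hui rfl, ih _ (by omega) huj rfl]
  rw [map_mul, LinearEquiv.mul_apply, geomRep_wordProd,
    M.prod_map_geomRefl_alternatingWord_single hij, map_add, map_smul, map_smul]
  refine add_pos_of_nonneg_of_pos (smul_nonneg (sinRatio_nonneg hij hn) (hu _ ?_).le)
    (smul_pos (sinRatio_pos hij hn0 hn) (hu _ ?_)) <;> split_ifs <;> simp

theorem geomRep_single_neg_of_isRightDescent (hM : ∀ i j, M i j ≠ 0) {w : W} {i : B}
    (hwi : cs.IsRightDescent w i) : cs.geomRep w (Pi.single i 1) < 0 := by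
  have h := cs.geomRep_single_pos_of_not_isRightDescent hM
    (cs.isRightDescent_iff_not_isRightDescent_mul.1 hwi)
  rwa [map_mul, LinearEquiv.mul_apply, geomRep_simple, M.geomRefl_single_self, map_neg,
    Left.neg_pos_iff] at h

def roots : Set (B → ℝ) := Set.range fun p : W × B => cs.geomRep p.1 (Pi.single p.2 1)

def inversionRoots (w : W) : Set (B → ℝ) := {β ∈ cs.roots | 0 < β ∧ cs.geomRep w β < 0}

variable {cs}

lemma cosForm_self_of_mem_roots {β : B → ℝ} (hβ : β ∈ cs.roots) : M.cosForm β β = 1 := by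
  obtain ⟨⟨u, i⟩, rfl⟩ := hβ
  simp [cosForm_geomRep]

lemma geomRep_mem_roots (w : W) {β : B → ℝ} (hβ : β ∈ cs.roots) : cs.geomRep w β ∈ cs.roots := by
  obtain ⟨⟨u, i⟩, rfl⟩ := hβ
  exact ⟨⟨w * u, i⟩, by simp⟩

lemma pos_or_neg_of_mem_roots (hM : ∀ i j, M i j ≠ 0) {β : B → ℝ} (hβ : β ∈ cs.roots) :
    0 < β ∨ β < 0 := by
  obtain ⟨⟨u, i⟩, rfl⟩ := hβ
  by_cases hui : cs.IsRightDescent u i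
  exacts [Or.inr (cs.geomRep_single_neg_of_isRightDescent hM hui),
    Or.inl (cs.geomRep_single_pos_of_not_isRightDescent hM hui)]

lemma exists_geomRep_eq_reflection {β : B → ℝ} (hβ : β ∈ cs.roots) :
    ∃ u : W, ∀ x, cs.geomRep u x = x - (2 * M.cosForm β x) • β := by
  obtain ⟨⟨v, i⟩, rfl⟩ := hβ
  refine ⟨v * s i * v⁻¹, fun x => ?_⟩
  have h := cs.cosForm_geomRep v (Pi.single i 1) ((cs.geomRep v)⁻¹ x)
  rw [← LinearEquiv.mul_apply, mul_inv_cancel, LinearEquiv.coe_one, id_eq] at h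
  rw [map_mul, map_mul, map_inv, LinearEquiv.mul_apply, LinearEquiv.mul_apply, geomRep_simple,
    M.geomRefl_apply, map_sub, map_smul, ← h, ← LinearEquiv.mul_apply, mul_inv_cancel,
    LinearEquiv.coe_one, id_eq]

theorem finite_inversionRoots (hM : ∀ i j, M i j ≠ 0) (w : W) : (cs.inversionRoots w).Finite := by
  obtain ⟨ω, rfl⟩ := cs.wordProd_surjective w
  refine (Set.finite_range fun k : Fin ω.length =>
    (cs.geomRep (cs.wordProd (ω.drop (k + 1))))⁻¹ (Pi.single ω[k] 1)).subset ?_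
  rintro β ⟨hβ, hpos, hneg⟩
  obtain ⟨k, hk, hk₁⟩ := Nat.exists_not_and_succ_of_not_zero_of_exists
    (p := fun k => 0 < cs.geomRep (cs.wordProd (ω.drop k)) β) (by simpa using hneg.not_gt)
    ⟨ω.length, by simpa using hpos⟩
  have hklt : k < ω.length := by
    by_contra! hle
    exact hk (by simpa [List.drop_eq_nil_of_le hle] using hpos)
  set γ := cs.geomRep (cs.wordProd (ω.drop (k + 1))) β
  have hγ : γ = Pi.single ω[k] 1 := by
    rw [List.drop_eq_getElem_cons hklt, wordProd_cons, map_mul, LinearEquiv.mul_apply,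
      geomRep_simple] at hk
    refine M.eq_single_of_geomRefl_neg ?_ hk₁ ?_
    · exact cosForm_self_of_mem_roots (geomRep_mem_roots _ hβ)
    · have hroot : M.geomRefl ω[k] γ ∈ cs.roots := by
        simpa using geomRep_mem_roots (s ω[k]) (geomRep_mem_roots _ hβ)
      exact (pos_or_neg_of_mem_roots hM hroot).resolve_left hk
  exact ⟨⟨k, hklt⟩, by simp [← hγ, γ]⟩

lemma geomRep_pow_mul_apply_eq_dihedralSeq {β₁ β₂ : B → ℝ} (hβ₁ : β₁ ∈ cs.roots)
    (hβ₂ : β₂ ∈ cs.roots) {u₁ u₂ : W} (hu₁ : ∀ x, cs.geomRep u₁ x = x - (2 * M.cosForm β₁ x) • β₁)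
    (hu₂ : ∀ x, cs.geomRep u₂ x = x - (2 * M.cosForm β₂ x) • β₂) (k : ℕ) :
    cs.geomRep ((u₁ * u₂) ^ k) β₁ = dihedralSeq (-M.cosForm β₁ β₂) (2 * k + 1) • β₁ +
      dihedralSeq (-M.cosForm β₁ β₂) (2 * k) • β₂ := by
  have hB₁ := cosForm_self_of_mem_roots hβ₁
  have hB₂ := cosForm_self_of_mem_roots hβ₂
  rw [map_pow]
  refine pow_apply_eq_dihedralSeq _ ?_ ?_ k <;>
  · simp only [map_mul, LinearEquiv.mul_apply, hu₁, hu₂, map_sub, map_smul, hB₁, hB₂,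
      M.cosForm_comm β₂ β₁, smul_eq_mul]
    module

theorem not_geomRep_neg_of_cosForm_lt_neg_one (hM : ∀ i j, M i j ≠ 0) {β₁ β₂ : B → ℝ}
    (hβ₁ : β₁ ∈ cs.roots) (hβ₂ : β₂ ∈ cs.roots) (hpos₁ : 0 < β₁) (hpos₂ : 0 < β₂)
    (hB : M.cosForm β₁ β₂ < -1) (w : W) : ¬ (cs.geomRep w β₁ < 0 ∧ cs.geomRep w β₂ < 0) := by
  rintro ⟨hw₁, hw₂⟩
  obtain ⟨u₁, hu₁⟩ := exists_geomRep_eq_reflection hβ₁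
  obtain ⟨u₂, hu₂⟩ := exists_geomRep_eq_reflection hβ₂
  have horbit := geomRep_pow_mul_apply_eq_dihedralSeq hβ₁ hβ₂ hu₁ hu₂
  set γ := -M.cosForm β₁ β₂
  set a := dihedralSeq γ
  have hmono := strictMono_dihedralSeq (γ := γ) (by linarith)
  have ha (n : ℕ) : 0 ≤ a n := (dihedralSeq_nonneg_and_lt (γ := γ) (by linarith) n).1
  have hmem (k : ℕ) : cs.geomRep ((u₁ * u₂) ^ k) β₁ ∈ cs.inversionRoots w := by
    have ha₁ : 0 < a (2 * k + 1) := (ha (2 * k)).trans_lt (hmono (by omega))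
    refine ⟨geomRep_mem_roots _ hβ₁, ?_, ?_⟩ <;> rw [horbit]
    · exact add_pos_of_pos_of_nonneg (smul_pos ha₁ hpos₁) (smul_nonneg (ha _) hpos₂.le)
    · rw [map_add, map_smul, map_smul]
      exact add_neg_of_neg_of_nonpos (smul_neg_of_pos_of_neg ha₁ hw₁)
        (smul_nonpos_of_nonneg_of_nonpos (ha _) hw₂.le)
  have hinj : Function.Injective fun k => cs.geomRep ((u₁ * u₂) ^ k) β₁ := by
    intro k l hkl
    -- pairing with `β₁ + γ β₂` reads off `(1 - γ ^ 2) a (2 k + 1)`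
    have h := congrArg (M.cosForm (β₁ + γ • β₂)) hkl
    simp only [horbit, map_add, map_smul, LinearMap.add_apply, LinearMap.smul_apply,
      cosForm_self_of_mem_roots hβ₁, cosForm_self_of_mem_roots hβ₂, M.cosForm_comm β₂ β₁,
      smul_eq_mul] at h
    have : a (2 * k + 1) = a (2 * l + 1) :=
      mul_left_cancel₀ (show 1 - γ ^ 2 ≠ 0 by nlinarith) (by linear_combination h)
    have hkl' : 2 * k + 1 = 2 * l + 1 := hmono.injective this
    omega
  exact Set.infinite_range_of_injective hinj
    ((finite_inversionRoots hM w).subset (Set.range_subset_iff.2 hmem))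

end CoxeterSystem

end

theorem stmt16_general {B : Type*} {W : Type*} [Group W] {M : CoxeterMatrix B}
    (cs : CoxeterSystem M W) (r s t : B)
    (hrs : r ≠ s) (hst : s ≠ t)
    (hB : ∀ i : B, i = r ∨ i = s ∨ i = t)
    (mrt : M r t = 2) (mst : M s t = 3) (msr : 8 ≤ M s r)
     :
    ¬ ∃ w w₁ w₂ : W, w = w₁ * cs.simple s * cs.simple t ∧ cs.length w = cs.length w₁ + 2 ∧
      w = w₂ * cs.simple s * cs.simple r ∧ cs.length w = cs.length w₂ + 2 := by
  classical
  have : Finite B := Finite.of_surjective ![r, s, t] fun i => by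
    rcases hB i with rfl | rfl | rfl
    exacts [⟨0, rfl⟩, ⟨1, rfl⟩, ⟨2, rfl⟩]
  have := Fintype.ofFinite B
  have hM : ∀ i j, M i j ≠ 0 := by
    intro i j
    rcases hB i with h | h | h <;> rcases hB j with h' | h' | h' <;> rw [h, h'] <;>
      (try simp only [M.diagonal, M.symmetric r s, M.symmetric t r, M.symmetric t s]) <;> omega
  rintro ⟨w, w₁, w₂, hw₁, hlen₁, hw₂, hlen₂⟩
  have hneg₁ := cs.geomRep_single_neg_of_isRightDescent hM
    (cs.isRightDescent_mul_simple_of_length_eq hw₁ hlen₁)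
  have hneg₂ := cs.geomRep_single_neg_of_isRightDescent hM
    (cs.isRightDescent_mul_simple_of_length_eq hw₂ hlen₂)
  simp only [map_mul, LinearEquiv.mul_apply, cs.geomRep_simple] at hneg₁ hneg₂
  refine cs.not_geomRep_neg_of_cosForm_lt_neg_one hM ⟨(cs.simple t, s), by simp⟩
    ⟨(cs.simple r, s), by simp⟩ (M.geomRefl_single_pos hst.symm) (M.geomRefl_single_pos hrs)
    ?_ w ⟨hneg₁, hneg₂⟩
  have hc := three_quarters_lt_cos_pi_div_sq (m := M s r) (by omega)
  simp only [M.geomRefl_single, map_add, map_smul, LinearMap.add_apply, LinearMap.smul_apply,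
    CoxeterMatrix.cosForm_single, M.diagonal, M.symmetric t s, mst, M.symmetric r s,
    M.symmetric t r, mrt, smul_eq_mul]
  norm_num [Real.cos_pi_div_three, Real.cos_pi_div_two]
  nlinarith

/-- no w can be written both as w₁·st and w₂·sr with lengths adding. -/
theorem stmt16 {B : Type*} {W : Type*} [Group W] {M : CoxeterMatrix B}
    (cs : CoxeterSystem M W) (r s t : B)
    (hrs : r ≠ s) (hrt : r ≠ t) (hst : s ≠ t)
    (hB : ∀ i : B, i = r ∨ i = s ∨ i = t)
    (mrt : M r t = 2) (mst : M s t = 3) (msr : 8 ≤ M s r)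
     :
    ¬ ∃ w w₁ w₂ : W, w = w₁ * cs.simple s * cs.simple t ∧ cs.length w = cs.length w₁ + 2 ∧
      w = w₂ * cs.simple s * cs.simple r ∧ cs.length w = cs.length w₂ + 2 :=
  stmt16_general cs r s t hrs hst hB mrt mst msr
end
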